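/- arXiv:2006.14823 — 3 statements merged into one kernel-verified Lean document; each statement's English description precedes it below -/
import Mathlib

section
/- Let Ω ⊂ ℝ² be a bounded Lipschitz domain, k ∈ ℕ*, and a₁, …, a_k, b₁, …, b_k ∈ Ω. If 2 max_{1≤i≤k} |a_i − b_i| < τ ≤ ρ̄(b₁,…,b_k)/3, then there exists a diffeomorphism Φ : Ω → Ω such that (i) Φ(x) = x for every x ∈ Ω ∖ ⋃_{i=1}^k B_{2τ}(b_i); (ii) Φ(x) = x + a_i − b_i for each i and every x ∈ B_τ(b_i); (iii) the operator norm bound |DΦ(x) − id| ≤ (2/τ) max_{1≤i≤k} |a_i − b_i| holds for every x ∈ Ω. -/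
open MeasureTheory Metric Set Filter Topology
open scoped ENNReal NNReal

noncomputable section

namespace Paper

/-- The plane `ℝ²`. -/
abbrev R2 : Type := EuclideanSpace ℝ (Fin 2)

/-- The period `2π` used to parametrise the circle `S¹` by `ℝ`. -/
def tp : ℝ := 2 * Real.pi

/-- The standard parametrisation of the unit circle in the plane. -/
def sc (t : ℝ) : R2 := (EuclideanSpace.equiv (Fin 2) ℝ).symm ![Real.cos t, Real.sin t]

variable {E : Type*} [NormedAddCommGroup E] [NormedSpace ℝ E]

/-- A loop with values in `N`, `2π`-periodically parametrised by `ℝ`. -/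
def IsLoopIn (N : Set E) (γ : ℝ → E) : Prop :=
  Function.Periodic γ tp ∧ ∀ t, γ t ∈ N

/-- The length of a loop. -/
def loopLength (γ : ℝ → E) : ℝ := ∫ t in (0:ℝ)..tp, ‖deriv γ t‖

/-- Mean oscillation of `f` over the interval `(a - r, a + r)`. -/
def meanOsc (f : ℝ → E) (a r : ℝ) : ℝ≥0∞ :=
  (∫⁻ s in Set.Ioo (a - r) (a + r), ∫⁻ t in Set.Ioo (a - r) (a + r),
      (‖f s - f t‖₊ : ℝ≥0∞)) / (ENNReal.ofReal (2 * r)) ^ 2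

/-- `f` has vanishing mean oscillation. -/
def IsVMO (f : ℝ → E) : Prop :=
  AEStronglyMeasurable f volume ∧
    Tendsto (fun δ : ℝ => ⨆ a : ℝ, ⨆ r ∈ Set.Ioc (0:ℝ) δ, meanOsc f a r)
      (nhdsWithin 0 (Set.Ioi 0)) (nhds 0)

/-- A distance inducing the `VMO` topology (a BMO-type part plus an `L¹` part). -/
def vmoDist (f g : ℝ → E) : ℝ≥0∞ :=
  (⨆ a : ℝ, ⨆ r ∈ Set.Ioc (0:ℝ) (1:ℝ), meanOsc (fun t => f t - g t) a r)
    + ∫⁻ t in Set.Ioo (0:ℝ) tp, (‖f t - g t‖₊ : ℝ≥0∞)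

/-- Membership in `VMO(S¹, N)`. -/
def MemVMOLoop (N : Set E) (f : ℝ → E) : Prop :=
  Function.Periodic f tp ∧ (∀ᵐ t : ℝ, f t ∈ N) ∧ IsVMO f

/-- Two maps are homotopic in `VMO(S¹, N)`: they are joined by a path of `VMO` loops
which is continuous for the `VMO` distance. -/
def VMOHomotopic (N : Set E) (f g : ℝ → E) : Prop :=
  ∃ H : ℝ → ℝ → E,
    (∀ s ∈ Set.Icc (0:ℝ) 1, MemVMOLoop N (H s)) ∧
    (∀ s₀ ∈ Set.Icc (0:ℝ) 1,
      Tendsto (fun s => vmoDist (H s) (H s₀)) (nhdsWithin s₀ (Set.Icc 0 1)) (nhds 0)) ∧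
    H 0 = f ∧ H 1 = g

/-- Minimal length `λ(γ)` in the `VMO`-homotopy class of `γ`. -/
def minLength (N : Set E) (γ : ℝ → E) : ℝ :=
  sInf { L : ℝ | ∃ γ' : ℝ → E, ContDiff ℝ 1 γ' ∧ IsLoopIn N γ' ∧ VMOHomotopic N γ' γ ∧
    L = loopLength γ' }

/-- A minimising closed geodesic: a constant-speed `C¹` loop whose length is minimal
in its free homotopy class. -/
def IsMinGeodesic (N : Set E) (γ : ℝ → E) : Prop :=
  ContDiff ℝ 1 γ ∧ IsLoopIn N γ ∧ loopLength γ = minLength N γ ∧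
  ∀ s t : ℝ, ‖deriv γ s‖ = ‖deriv γ t‖

/-- Gagliardo `W^{1/2,2}` seminorm of a loop. -/
def gagliardo (γ : ℝ → E) : ℝ≥0∞ :=
  ∫⁻ s in Set.Ioo (0:ℝ) tp, ∫⁻ t in Set.Ioo (0:ℝ) tp,
    ((‖γ s - γ t‖₊ : ℝ≥0∞)) ^ 2 / (ENNReal.ofReal (dist s t)) ^ 2

/-- Membership in `W^{1/2,2}(S¹, N)`. -/
def MemW12HalfLoop (N : Set E) (γ : ℝ → E) : Prop :=
  Function.Periodic γ tp ∧ AEStronglyMeasurable γ volume ∧ (∀ᵐ t : ℝ, γ t ∈ N) ∧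
  gagliardo γ < ⊤ ∧ (∫⁻ t in Set.Ioo (0:ℝ) tp, (‖γ t‖₊ : ℝ≥0∞) ^ 2) < ⊤

/-- Strong convergence in `W^{1/2,2}(S¹, E)`. -/
def W12HalfTendsto (γn : ℕ → ℝ → E) (γ : ℝ → E) : Prop :=
  Tendsto (fun n => gagliardo (fun t => γn n t - γ t)
      + ∫⁻ t in Set.Ioo (0:ℝ) tp, (‖γn n t - γ t‖₊ : ℝ≥0∞) ^ 2) atTop (nhds 0)

/-- Squared Frobenius norm of a linear map on the plane. -/
def fro2 (L : R2 →L[ℝ] E) : ℝ := ∑ i : Fin 2, ‖L (EuclideanSpace.single i (1:ℝ))‖ ^ 2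

/-- Dirichlet energy `∫_A |Du|²/2`. -/
def dirE (A : Set R2) (u : R2 → E) : ℝ := ∫ x in A, fro2 (fderiv ℝ u x) / 2

/-- Membership in `W^{1,2}(A, N)`. -/
def MemW12 (A : Set R2) (N : Set E) (u : R2 → E) : Prop :=
  AEStronglyMeasurable u (volume.restrict A) ∧
  (∀ᵐ x ∂volume.restrict A, u x ∈ N) ∧
  (∀ᵐ x ∂volume.restrict A, DifferentiableAt ℝ u x) ∧
  (∫⁻ x in A, ENNReal.ofReal (fro2 (fderiv ℝ u x))) < ⊤

/-- Squared Frobenius norm of a linear map on the cylinder `ℝ × ℝ`. -/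
def fro2' (L : ℝ × ℝ →L[ℝ] E) : ℝ := ‖L (1, 0)‖ ^ 2 + ‖L (0, 1)‖ ^ 2

/-- Dirichlet energy on the cylinder `S¹ × [0, T]`. -/
def cylEnergy (T : ℝ) (u : ℝ × ℝ → E) : ℝ :=
  ∫ p in (Set.Ioo (0:ℝ) tp) ×ˢ (Set.Ioo (0:ℝ) T), fro2' (fderiv ℝ u p) / 2

/-- Membership in `W^{1,2}(S¹ × [0,T], N)`. -/
def MemW12Cyl (T : ℝ) (N : Set E) (u : ℝ × ℝ → E) : Prop :=
  (∀ s t : ℝ, u (s + tp, t) = u (s, t)) ∧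
  AEStronglyMeasurable u (volume.restrict ((Set.Ioo (0:ℝ) tp) ×ˢ (Set.Ioo (0:ℝ) T))) ∧
  (∀ᵐ p ∂volume.restrict ((Set.Ioo (0:ℝ) tp) ×ˢ (Set.Ioo (0:ℝ) T)), u p ∈ N) ∧
  (∀ᵐ p ∂volume.restrict ((Set.Ioo (0:ℝ) tp) ×ˢ (Set.Ioo (0:ℝ) T)), DifferentiableAt ℝ u p) ∧
  (∫⁻ p in (Set.Ioo (0:ℝ) tp) ×ˢ (Set.Ioo (0:ℝ) T), ENNReal.ofReal (fro2' (fderiv ℝ u p))) < ⊤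

/-- Synharmony between two loops `γ` and `β`. -/
def synhar (N : Set E) (γ β : ℝ → E) : EReal :=
  sInf { c : EReal | ∃ (T : ℝ) (u : ℝ × ℝ → E), 0 < T ∧ MemW12Cyl T N u ∧
    (∀ s, u (s, 0) = γ s) ∧ (∀ s, u (s, T) = β s) ∧
    c = ((cylEnergy T u - (minLength N γ) ^ 2 / (8 * Real.pi ^ 2) * (tp * T) : ℝ) : EReal) }

/-- The boundary of `Ω` is locally the graph of a Lipschitz function. -/
def HasLipschitzBoundary (Ω : Set R2) : Prop :=
  ∀ x ∈ frontier Ω, ∃ (r : ℝ) (f : ℝ → ℝ) (K : ℝ≥0) (e : R2 ≃ₗᵢ[ℝ] R2),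
    0 < r ∧ LipschitzWith K f ∧
    ∀ y ∈ Metric.ball x r,
      (y ∈ Ω ↔ f (((EuclideanSpace.equiv (Fin 2) ℝ) (e (y - x))) 0)
        < ((EuclideanSpace.equiv (Fin 2) ℝ) (e (y - x))) 1)

/-- A bounded Lipschitz domain in the plane. -/
def IsLipschitzDomain (Ω : Set R2) : Prop :=
  IsOpen Ω ∧ IsConnected Ω ∧ Bornology.IsBounded Ω ∧ HasLipschitzBoundary Ω

/-- The radius `ρ̄(a₁, …, a_k)`. -/
def rbar (Ω : Set R2) {ι : Type*} (a : ι → R2) : ℝ :=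
  sInf ({ d : ℝ | ∃ i j, i ≠ j ∧ d = dist (a i) (a j) / 2 }
    ∪ { d : ℝ | ∃ i, d = Metric.infDist (a i) Ωᶜ })

/-- `(γ_i)` is a topological resolution of the boundary datum `g` (Sobolev version). -/
def IsTopResolutionW (Ω : Set R2) (N : Set E) (g : R2 → E) {ι : Type*} (γ : ι → ℝ → E) : Prop :=
  ∃ (a : ι → R2) (ρ : ℝ), (∀ i, a i ∈ Ω) ∧ Function.Injective a ∧ 0 < ρ ∧ ρ < rbar Ω a ∧
    ∃ u : R2 → E, MemW12 (Ω \ ⋃ i, Metric.closedBall (a i) ρ) N u ∧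
      (∀ x ∈ frontier Ω, u x = g x) ∧ ∀ i t, u (a i + ρ • sc t) = γ i t

/-- The singular energy `E^sg(g)` of a boundary datum. -/
def Esg (Ω : Set R2) (N : Set E) (g : R2 → E) : ℝ :=
  sInf { c : ℝ | ∃ (k : ℕ) (γ : Fin k → ℝ → E), 0 < k ∧ IsTopResolutionW Ω N g γ ∧
    c = ∑ i, (minLength N (γ i)) ^ 2 / (4 * Real.pi) }

/-- A minimal topological resolution of `g`. -/
def IsMinimalTopResolution (Ω : Set R2) (N : Set E) (g : R2 → E) {ι : Type*} [Fintype ι]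
    (γ : ι → ℝ → E) : Prop :=
  IsTopResolutionW Ω N g γ ∧
  (∑ i, (minLength N (γ i)) ^ 2 / (4 * Real.pi)) = Esg Ω N g ∧
  ∀ i, 0 < minLength N (γ i)

/-- The geometrical energy outside disks `E^{geom,ρ}`. -/
def Egeomρ (Ω : Set R2) (N : Set E) (g : R2 → E) {ι : Type*} (γ : ι → ℝ → E)
    (a : ι → R2) (ρ : ℝ) : ℝ :=
  sInf { c : ℝ | ∃ u : R2 → E, MemW12 (Ω \ ⋃ i, Metric.closedBall (a i) ρ) N u ∧
    (∀ x ∈ frontier Ω, u x = g x) ∧ (∀ i t, u (a i + ρ • sc t) = γ i t) ∧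
    c = dirE (Ω \ ⋃ i, Metric.closedBall (a i) ρ) u }

/-- The topological energy outside disks `E^{top,ρ}`. -/
def Etopρ (Ω : Set R2) (N : Set E) (g : R2 → E) {ι : Type*} (γ : ι → ℝ → E)
    (a : ι → R2) (ρ : ℝ) : ℝ :=
  sInf { c : ℝ | ∃ u : R2 → E, MemW12 (Ω \ ⋃ i, Metric.closedBall (a i) ρ) N u ∧
    (∀ x ∈ frontier Ω, u x = g x) ∧
    (∀ i, VMOHomotopic N (fun t => u (a i + ρ • sc t)) (γ i)) ∧
    c = dirE (Ω \ ⋃ i, Metric.closedBall (a i) ρ) u }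

/-- The logarithmic correction `∑ λ(γ_i)²/(4π) log(1/ρ)`. -/
def renCor (N : Set E) {ι : Type*} [Fintype ι] (γ : ι → ℝ → E) (ρ : ℝ) : ℝ :=
  (∑ i, (minLength N (γ i)) ^ 2 / (4 * Real.pi)) * Real.log (1 / ρ)

/-- The geometrical renormalised energy `E^{geom}`. -/
def Egeom (Ω : Set R2) (N : Set E) (g : R2 → E) {ι : Type*} [Fintype ι] (γ : ι → ℝ → E)
    (a : ι → R2) : ℝ :=
  sInf { c : ℝ | ∃ ρ ∈ Set.Ioo (0:ℝ) (rbar Ω a), c = Egeomρ Ω N g γ a ρ - renCor N γ ρ }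

/-- The topological renormalised energy `E^{top}`. -/
def Etop (Ω : Set R2) (N : Set E) (g : R2 → E) {ι : Type*} [Fintype ι] (γ : ι → ℝ → E)
    (a : ι → R2) : ℝ :=
  sSup { c : ℝ | ∃ ρ ∈ Set.Ioo (0:ℝ) (rbar Ω a), c = Etopρ Ω N g γ a ρ - renCor N γ ρ }

/-- `u` is an `N`-valued minimising harmonic map in `A` with respect to its own
boundary conditions. -/
def IsMinimizingMap (A : Set R2) (N : Set E) (u : R2 → E) : Prop :=
  MemW12 A N u ∧ ∀ v : R2 → E, MemW12 A N v → (∀ x ∈ frontier A, v x = u x) →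
    dirE A u ≤ dirE A v

/-- The renormalised energy `E^{ren}(u)` of a map relative to the singular set `S`. -/
def renE (Ω : Set R2) (N : Set E) (S : Finset R2) (u : R2 → E) : EReal :=
  Filter.liminf
    (fun ρ : ℝ => ((dirE (Ω \ ⋃ a ∈ S, Metric.closedBall a ρ) u
      - ∑ a ∈ S, (minLength N (fun t => u (a + ρ • sc t))) ^ 2 / (4 * Real.pi)
          * Real.log (1 / ρ) : ℝ) : EReal))
    (nhdsWithin 0 (Set.Ioi 0))

/-- `u` is a renormalisable map: `u ∈ W^{1,2}_{ren}(Ω, N)`. -/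
def MemW12ren (Ω : Set R2) (N : Set E) (u : R2 → E) : Prop :=
  ∃ S : Finset R2, ↑S ⊆ Ω ∧
    (∃ ρ₀ > (0:ℝ), ∀ ρ ∈ Set.Ioo (0:ℝ) ρ₀,
      MemW12 (Ω \ ⋃ a ∈ S, Metric.closedBall a ρ) N u) ∧
    renE Ω N S u < ⊤

/-- `sing(u) = {(a_i, γ_i)}`. -/
def HasSingularities (Ω : Set R2) (N : Set E) (u : R2 → E) {ι : Type*} (a : ι → R2)
    (γ : ι → ℝ → E) : Prop :=
  Function.Injective a ∧ (∀ i, a i ∈ Ω) ∧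
  (∀ x ∈ closure Ω, x ∉ Set.range a → ∃ ε > (0:ℝ), MemW12 (Ω ∩ Metric.ball x ε) N u) ∧
  (∀ i, Tendsto (fun ρ : ℝ => synhar N (fun t => u (a i + ρ • sc t)) (γ i))
      (nhdsWithin 0 (Set.Ioi 0)) (nhds 0)) ∧
  (∀ i, ¬ ∃ y : E, VMOHomotopic N (γ i) (fun _ => y))

end Paper

open Paper

/-!
Take `Φ x = x + ∑ᵢ η(|x - bᵢ|) (aᵢ - bᵢ)` with a smooth cutoff `η` equal to `1` up to `τ`, to `0`
from `2τ` on, and of slope at most `2/τ`. The hypothesis `τ ≤ ρ̄/3` makes the disks `B_{2τ}(bᵢ)` far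
apart and contained in `Ω`, so near any point at most one term of the sum varies: the displacement
field has derivative, hence Lipschitz constant, at most `(2/τ) maxᵢ |aᵢ - bᵢ| < 1`. A perturbation
of the identity by a contraction is a bijection of the plane, and since `Φ` fixes every point
outside the disks, it maps `Ω` bijectively onto itself.
-/

structure IsSmoothCutoff (η : ℝ → ℝ) (r R : ℝ) (L : ℝ≥0) : Prop where
  contDiff : ContDiff ℝ (⊤ : ℕ∞) η
  eq_one_of_le : ∀ t ≤ r, η t = 1
  eq_zero_of_le : ∀ t, R ≤ t → η t = 0
  lipschitzWith : LipschitzWith L η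

/-- The cutoff is `1` minus a primitive of a normalized bump supported in `(r, R)` whose inner
radius `1 / (2L)` makes its height at most `L`; this is why any slope `L > 1 / (R - r)` is
attainable. -/
theorem exists_isSmoothCutoff {r R : ℝ} {L : ℝ≥0} (hL : 1 < L * (R - r)) :
    ∃ η, IsSmoothCutoff η r R L := by
  have hrR : r < R := sub_pos.1 (pos_of_mul_pos_right (one_pos.trans hL) L.coe_nonneg)
  have hL0 : 0 < (L : ℝ) := pos_of_mul_pos_left (one_pos.trans hL) (sub_pos.2 hrR).le
  let f : ContDiffBump ((r + R) / 2) :=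
    { rIn := (2 * L)⁻¹
      rOut := (R - r) / 2
      rIn_pos := by positivity
      rIn_lt_rOut := by
        rw [inv_lt_iff_one_lt_mul₀ (by positivity)]
        linarith }
  set ψ := f.normed volume
  have hψ_support : Function.support ψ = Ioo r R := by
    rw [f.support_normed_eq, Real.ball_eq_Ioo]
    congr 1 <;> simp only [f] <;> ring
  have hψ_le : ∀ t, ψ t ≤ L := fun t => by
    have h := f.normed_le_div_measure_closedBall_rIn volume t
    rw [Real.volume_real_closedBall f.rIn_pos.le] at h
    refine h.trans_eq ?_
    change 1 / (2 * (2 * (L : ℝ))⁻¹) = L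
    field_simp
  have hη_deriv : ∀ t, HasDerivAt (fun t => 1 - ∫ s in r..t, ψ s) (-ψ t) t := fun t => by
    exact (f.continuous_normed.integral_hasStrictDerivAt r t).hasDerivAt.const_sub 1
  have hη_diff : Differentiable ℝ fun t => 1 - ∫ s in r..t, ψ s :=
    fun t => (hη_deriv t).differentiableAt
  refine ⟨fun t => 1 - ∫ s in r..t, ψ s, ⟨?_, fun t ht => ?_, fun t ht => ?_, ?_⟩⟩
  · refine contDiff_infty_iff_deriv.2 ⟨hη_diff, ?_⟩
    rw [funext fun t => (hη_deriv t).deriv]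
    exact f.contDiff_normed.neg
  · have hzero : ∀ s ∈ uIcc r t, ψ s = 0 := fun s hs => by
      rw [← Function.notMem_support, hψ_support]
      rw [uIcc_of_ge ht] at hs
      exact fun h => (h.1.trans_le hs.2).false
    rw [intervalIntegral.integral_congr hzero, intervalIntegral.integral_zero, sub_zero]
  · rw [intervalIntegral.integral_eq_integral_of_support_subset
      (hψ_support.trans_subset (Ioo_subset_Ioc_self.trans (Ioc_subset_Ioc_right ht))),
      f.integral_normed, sub_self]
  · refine lipschitzWith_of_nnnorm_deriv_le hη_diff fun t => ?_
    rw [(hη_deriv t).deriv, nnnorm_neg, ← NNReal.coe_le_coe, coe_nnnorm, Real.norm_eq_abs,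
      abs_of_nonneg (f.nonneg_normed t)]
    exact hψ_le t

theorem Function.Bijective.bijOn_of_subset_of_eq_of_notMem {α : Type*} {f : α → α}
    (hf : Function.Bijective f) {s U : Set α} (hUs : U ⊆ s) (hfix : ∀ x ∉ U, f x = x) :
    BijOn f s s := by
  refine ⟨fun x hx => ?_, hf.1.injOn, fun y hy => ?_⟩
  · by_cases hxU : x ∈ U
    · by_contra hfx
      have hfxU : f x ∉ U := fun h => hfx (hUs h)
      exact (hf.1 (hfix _ hfxU) ▸ hfxU) hxU
    · rwa [hfix x hxU]
  · obtain ⟨x, rfl⟩ := hf.2 y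
    by_cases hxU : x ∈ U
    · exact ⟨x, hUs hxU, rfl⟩
    · exact ⟨x, by rwa [← hfix x hxU], rfl⟩

theorem Function.bijective_add_of_lipschitzWith {E : Type*} [NormedAddCommGroup E]
    [NormedSpace ℝ E] [CompleteSpace E] {g : E → E} {C : ℝ≥0} (hg : LipschitzWith C g)
    (hC : C < 1) : Function.Bijective fun x => x + g x := by
  have happrox : ApproximatesLinearOn (fun x => x + g x)
      ((ContinuousLinearEquiv.refl ℝ E : E ≃L[ℝ] E) : E →L[ℝ] E) univ C := fun x _ y _ => by
    simpa [dist_eq_norm, add_sub_add_comm] using hg.dist_le_mul x y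
  have hc : Subsingleton E ∨
      C < ‖(((ContinuousLinearEquiv.refl ℝ E).symm : E ≃L[ℝ] E) : E →L[ℝ] E)‖₊⁻¹ := by
    rcases subsingleton_or_nontrivial E with hE | hE
    · exact Or.inl hE
    · right
      simpa [ContinuousLinearMap.nnnorm_id] using hC
  exact ⟨injOn_univ.1 (happrox.injOn hc), happrox.surjective hc⟩

section LocalTranslation

variable {F : Type*} [NormedAddCommGroup F] [InnerProductSpace ℝ F] {ι : Type*} [Fintype ι]
  {η : ℝ → ℝ} {r R : ℝ} {L : ℝ≥0}

def localTranslation (η : ℝ → ℝ) (b v : ι → F) (x : F) : F :=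
  ∑ i, η (dist x (b i)) • v i

theorem IsSmoothCutoff.contDiff_comp_dist (hη : IsSmoothCutoff η r R L) (hr : 0 < r) (c : F) :
    ContDiff ℝ (⊤ : ℕ∞) fun x => η (dist x c) := by
  refine contDiff_iff_contDiffAt.2 fun x => ?_
  rcases eq_or_ne x c with rfl | hx
  · refine (contDiffAt_const (c := (1 : ℝ))).congr_of_eventuallyEq ?_
    filter_upwards [ball_mem_nhds x hr] with y hy
    exact hη.eq_one_of_le _ hy.le
  · exact hη.contDiff.contDiffAt.comp x (contDiffAt_id.dist ℝ contDiffAt_const hx)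

theorem IsSmoothCutoff.lipschitzWith_smul_comp_dist (hη : IsSmoothCutoff η r R L) (c v : F) :
    LipschitzWith (L * ‖v‖₊) fun x => η (dist x c) • v := by
  refine LipschitzWith.of_dist_le_mul fun x y => ?_
  rw [dist_eq_norm, ← sub_smul, norm_smul, ← dist_eq_norm, NNReal.coe_mul, coe_nnnorm,
    mul_right_comm]
  gcongr
  exact ((hη.lipschitzWith.comp (LipschitzWith.dist_left c)).dist_le_mul x y).trans_eq
    (by simp)

theorem localTranslation_eq_zero (hη : IsSmoothCutoff η r R L) {b v : ι → F} {x : F}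
    (hx : ∀ i, R ≤ dist x (b i)) : localTranslation η b v x = 0 :=
  Finset.sum_eq_zero fun i _ => by rw [hη.eq_zero_of_le _ (hx i), zero_smul]

theorem localTranslation_eq_of_dist_le (hη : IsSmoothCutoff η r R L) {b : ι → F}
    (hsep : Pairwise fun i j => 2 * R < dist (b i) (b j)) (v : ι → F) {i : ι} {x : F}
    (hx : dist x (b i) ≤ R) : localTranslation η b v x = η (dist x (b i)) • v i := by
  refine Finset.sum_eq_single i (fun j _ hji => ?_) (by simp)
  have hsep' := hsep hji
  rw [hη.eq_zero_of_le _ (by linarith [dist_triangle_left (b j) (b i) x]), zero_smul]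

theorem contDiff_localTranslation (hη : IsSmoothCutoff η r R L) (hr : 0 < r) (b v : ι → F) :
    ContDiff ℝ (⊤ : ℕ∞) (localTranslation η b v) :=
  ContDiff.sum fun i _ => (hη.contDiff_comp_dist hr (b i)).smul contDiff_const

/-- At most one term of the sum is non-constant near any given point, since the supports of the
terms are `2R`-separated. -/
theorem norm_fderiv_localTranslation_le (hη : IsSmoothCutoff η r R L) (hr : 0 < r) {b : ι → F}
    (hsep : Pairwise fun i j => 2 * R < dist (b i) (b j)) {v : ι → F} {M : ℝ≥0}
    (hv : ∀ i, ‖v i‖ ≤ M) (x : F) :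
    ‖fderiv ℝ (localTranslation η b v) x‖ ≤ L * M := by
  set G : ι → F → F := fun i y => η (dist y (b i)) • v i
  have hG_diff : ∀ i, Differentiable ℝ (G i) := fun i =>
    ((hη.contDiff_comp_dist hr (b i)).smul contDiff_const).differentiable (by simp)
  have hG_local : ∀ i, fderiv ℝ (G i) x ≠ 0 → dist x (b i) ≤ R := fun i => by
    refine not_imp_comm.1 fun hxi => ?_
    have hzero : G i =ᶠ[𝓝 x] fun _ => 0 := by
      filter_upwards [(isOpen_lt continuous_const (continuous_id.dist continuous_const)).mem_nhds
        (not_le.1 hxi)] with y hy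
      have hy' : R ≤ dist y (b i) := hy.le
      simp only [G, hη.eq_zero_of_le _ hy', zero_smul]
    rw [hzero.fderiv_eq, fderiv_const_apply]
  have hsum : fderiv ℝ (localTranslation η b v) x = ∑ i, fderiv ℝ (G i) x :=
    fderiv_fun_sum fun i _ => (hG_diff i).differentiableAt
  rw [hsum]
  by_cases h : ∃ i, fderiv ℝ (G i) x ≠ 0
  · obtain ⟨i, hi⟩ := h
    rw [Finset.sum_eq_single i (fun j _ hji => ?_) (by simp)]
    · calc ‖fderiv ℝ (G i) x‖ ≤ L * ‖v i‖₊ :=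
            norm_fderiv_le_of_lipschitz ℝ (hη.lipschitzWith_smul_comp_dist (b i) (v i))
        _ ≤ L * M := by push_cast; gcongr; exact hv i
    · by_contra hj
      linarith [hsep hji, hG_local i hi, hG_local j hj, dist_triangle_left (b j) (b i) x]
  · push Not at h
    rw [Finset.sum_eq_zero fun i _ => h i, norm_zero]
    positivity

theorem lipschitzWith_localTranslation (hη : IsSmoothCutoff η r R L) (hr : 0 < r) {b : ι → F}
    (hsep : Pairwise fun i j => 2 * R < dist (b i) (b j)) {v : ι → F} {M : ℝ≥0}
    (hv : ∀ i, ‖v i‖ ≤ M) : LipschitzWith (L * M) (localTranslation η b v) :=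
  lipschitzWith_of_nnnorm_fderiv_le ((contDiff_localTranslation hη hr b v).differentiable (by simp))
    fun x => by
      rw [← NNReal.coe_le_coe, coe_nnnorm, NNReal.coe_mul]
      exact norm_fderiv_localTranslation_le hη hr hsep hv x

theorem exists_contDiff_bijective_translate_balls [CompleteSpace F] (b v : ι → F) {τ : ℝ}
    {M : ℝ≥0} (hτ : 2 * M < τ) (hv : ∀ i, ‖v i‖ ≤ M)
    (hsep : Pairwise fun i j => 4 * τ < dist (b i) (b j)) :
    ∃ Φ : F → F, ContDiff ℝ (⊤ : ℕ∞) Φ ∧ Function.Bijective Φ ∧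
      (∀ x, (∀ i, 2 * τ ≤ dist x (b i)) → Φ x = x) ∧
      (∀ i, ∀ x ∈ ball (b i) τ, Φ x = x + v i) ∧
      ∀ x, ‖fderiv ℝ Φ x - ContinuousLinearMap.id ℝ F‖ ≤ 2 / τ * M := by
  have hτ0 : 0 < τ := lt_of_le_of_lt (by positivity) hτ
  set L : ℝ≥0 := ⟨2 / τ, by positivity⟩
  obtain ⟨η, hη⟩ := exists_isSmoothCutoff (r := τ) (R := 2 * τ) (L := L) (by
    change 1 < 2 / τ * (2 * τ - τ)
    field_simp
    norm_num)
  have hsep' : Pairwise fun i j => 2 * (2 * τ) < dist (b i) (b j) := fun i j hij => by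
    linarith [hsep hij]
  have hdiff : Differentiable ℝ (localTranslation η b v) :=
    (contDiff_localTranslation hη hτ0 b v).differentiable (by simp)
  refine ⟨fun x => x + localTranslation η b v x,
    contDiff_id.add (contDiff_localTranslation hη hτ0 b v),
    Function.bijective_add_of_lipschitzWith (lipschitzWith_localTranslation hη hτ0 hsep' hv) ?_,
    fun x hx => ?_, fun i x hx => ?_, fun x => ?_⟩
  · rw [← NNReal.coe_lt_coe, NNReal.coe_mul, NNReal.coe_one]
    change 2 / τ * M < 1
    rw [div_mul_eq_mul_div, div_lt_one hτ0]
    exact hτ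
  · dsimp only
    rw [localTranslation_eq_zero hη hx, add_zero]
  · have hx' : dist x (b i) < τ := hx
    dsimp only
    rw [localTranslation_eq_of_dist_le hη hsep' v (by linarith), hη.eq_one_of_le _ hx'.le,
      one_smul]
  · rw [fderiv_fun_add differentiableAt_fun_id (hdiff x), fderiv_fun_id, add_sub_cancel_left]
    exact norm_fderiv_localTranslation_le hη hτ0 hsep' hv x

end LocalTranslation

namespace Paper

variable {ι : Type*}

theorem rbar_le_dist_div_two (Ω : Set R2) {a : ι → R2} {i j : ι} (hij : i ≠ j) :
    rbar Ω a ≤ dist (a i) (a j) / 2 := by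
  refine csInf_le ⟨0, ?_⟩ (Or.inl ⟨i, j, hij, rfl⟩)
  rintro d (⟨i, j, -, rfl⟩ | ⟨i, rfl⟩)
  · positivity
  · exact infDist_nonneg

theorem rbar_le_infDist (Ω : Set R2) (a : ι → R2) (i : ι) : rbar Ω a ≤ infDist (a i) Ωᶜ := by
  refine csInf_le ⟨0, ?_⟩ (Or.inr ⟨i, rfl⟩)
  rintro d (⟨i, j, -, rfl⟩ | ⟨i, rfl⟩)
  · positivity
  · exact infDist_nonneg

theorem ball_subset_of_le_rbar {Ω : Set R2} {a : ι → R2} {ρ : ℝ} (hρ : ρ ≤ rbar Ω a) (i : ι) :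
    ball (a i) ρ ⊆ Ω :=
  (ball_subset_ball (hρ.trans (rbar_le_infDist Ω a i))).trans ball_infDist_compl_subset

end Paper

theorem statement12_general (Ω : Set R2)
    {k : ℕ} (a b : Fin k → R2)
    (τ : ℝ) (hτ1 : 2 * (⨆ i, dist (a i) (b i)) < τ) (hτ2 : τ ≤ rbar Ω b / 3) :
    ∃ Φ : R2 → R2, ContDiff ℝ (⊤ : ℕ∞) Φ ∧ Set.BijOn Φ Ω Ω ∧
      (∀ x ∈ Ω \ ⋃ i, Metric.ball (b i) (2 * τ), Φ x = x) ∧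
      (∀ i, ∀ x ∈ Metric.ball (b i) τ, Φ x = x + (a i - b i)) ∧
      (∀ x ∈ Ω, ‖fderiv ℝ Φ x - ContinuousLinearMap.id ℝ R2‖
        ≤ (2 / τ) * ⨆ i, dist (a i) (b i)) := by
  set M := ⨆ i, dist (a i) (b i)
  have hM : 0 ≤ M := Real.iSup_nonneg fun i => (dist_nonneg : 0 ≤ dist (a i) (b i))
  have hτ : 0 < τ := by linarith
  have hv : ∀ i, ‖(a - b) i‖ ≤ M.toNNReal := fun i => by
    rw [Real.coe_toNNReal _ hM, Pi.sub_apply, ← dist_eq_norm]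
    exact le_ciSup (finite_range fun i => dist (a i) (b i)).bddAbove i
  have hsep : Pairwise fun i j => 4 * τ < dist (b i) (b j) := fun i j hij => by
    linarith [rbar_le_dist_div_two Ω (a := b) hij]
  obtain ⟨Φ, hsmooth, hbij, hfix, htrans, hderiv⟩ :=
    exists_contDiff_bijective_translate_balls b (a - b) (by rwa [Real.coe_toNNReal _ hM]) hv hsep
  have hfix' : ∀ x ∉ ⋃ i, ball (b i) (2 * τ), Φ x = x := fun x hx =>
    hfix x fun i => not_lt.1 fun h => hx (mem_iUnion.2 ⟨i, h⟩)
  refine ⟨Φ, hsmooth, hbij.bijOn_of_subset_of_eq_of_notMem ?_ hfix', fun x hx => hfix' x hx.2,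
    htrans, fun x _ => ?_⟩
  · exact iUnion_subset fun i => ball_subset_of_le_rbar (by linarith) i
  · simpa only [Real.coe_toNNReal _ hM] using hderiv x

/-- The deformation diffeomorphism: if
`2 maxᵢ |aᵢ − bᵢ| < τ ≤ ρ̄(b₁,…,b_k)/3` then there is a diffeomorphism `Φ : Ω → Ω` equal
to the identity outside the balls `B_{2τ}(bᵢ)`, to the translation `x ↦ x + aᵢ − bᵢ` on
`B_τ(bᵢ)`, and with `|DΦ − id| ≤ (2/τ) maxᵢ |aᵢ − bᵢ|` everywhere on `Ω`. -/
theorem statement12 (Ω : Set R2) (hΩ : IsLipschitzDomain Ω)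
    {k : ℕ} (hk : 0 < k) (a b : Fin k → R2)
    (ha : ∀ i, a i ∈ Ω) (hb : ∀ i, b i ∈ Ω)
    (τ : ℝ) (hτ1 : 2 * (⨆ i, dist (a i) (b i)) < τ) (hτ2 : τ ≤ rbar Ω b / 3) :
    ∃ Φ : R2 → R2, ContDiff ℝ (⊤ : ℕ∞) Φ ∧ Set.BijOn Φ Ω Ω ∧
      (∀ x ∈ Ω \ ⋃ i, Metric.ball (b i) (2 * τ), Φ x = x) ∧
      (∀ i, ∀ x ∈ Metric.ball (b i) τ, Φ x = x + (a i - b i)) ∧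
      (∀ x ∈ Ω, ‖fderiv ℝ Φ x - ContinuousLinearMap.id ℝ R2‖
        ≤ (2 / τ) * ⨆ i, dist (a i) (b i)) :=
  statement12_general Ω a b τ hτ1 hτ2
end
end

section
/- For every finite set 𝓑 of closed balls of ℝ², there exists a finite set 𝓑′ of pairwise disjoint nonempty closed balls of ℝ² such that every ball of 𝓑 is contained in some ball of 𝓑′ (that is, 𝓑 = ⋃_{B′∈𝓑′} {B ∈ 𝓑 : B ⊆ B′}), and ∑_{B′∈𝓑′} diam(B′) = ∑_{B∈𝓑} diam(B). -/
open MeasureTheory Metric Set Filter Topology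
open scoped ENNReal NNReal

noncomputable section

open Paper

/-!
Two closed balls `B(a, r)` and `B(b, s)` that meet lie in the ball of radius `r + s` centred at
the point of `[a, b]` dividing it in the ratio `s : r`. Replacing two meeting balls by that ball
keeps the total radius and lowers the number of balls, so repeating it ends with a pairwise
disjoint family. The balls are kept in a multiset, since a merged ball may coincide with one
that is already present.
-/

section

variable {E : Type*} [NormedAddCommGroup E] [NormedSpace ℝ E]

theorem exists_closedBall_add_superset {a b : E} {r s : ℝ} (hr : 0 ≤ r) (hs : 0 ≤ s)
    (h : dist a b ≤ r + s) :
    ∃ c, closedBall a r ⊆ closedBall c (r + s) ∧ closedBall b s ⊆ closedBall c (r + s) := by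
  rcases (add_nonneg hr hs).eq_or_lt with h0 | h0
  · refine ⟨a, closedBall_subset_closedBall (le_add_of_nonneg_right hs),
      closedBall_subset_closedBall' ?_⟩
    rw [dist_comm]
    linarith
  · set t := s / (r + s)
    have ht : 1 - t = r / (r + s) := by
      rw [eq_div_iff h0.ne', sub_mul, div_mul_cancel₀ _ h0.ne']
      ring
    refine ⟨AffineMap.lineMap a b t, closedBall_subset_closedBall' ?_,
      closedBall_subset_closedBall' ?_⟩
    · rw [dist_comm, dist_lineMap_left, Real.norm_of_nonneg (by positivity)]
      have : t * dist a b ≤ t * (r + s) := by gcongr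
      rw [div_mul_cancel₀ _ h0.ne'] at this
      linarith
    · rw [dist_comm, dist_lineMap_right, ht, Real.norm_of_nonneg (by positivity)]
      have : r / (r + s) * dist a b ≤ r / (r + s) * (r + s) := by gcongr
      rw [div_mul_cancel₀ _ h0.ne'] at this
      linarith

theorem exists_merge_of_not_disjoint_closedBall {p q : E × ℝ} {N : Multiset (E × ℝ)}
    (hM : ∀ x ∈ p ::ₘ q ::ₘ N, 0 ≤ x.2)
    (hpq : ¬Disjoint (closedBall p.1 p.2) (closedBall q.1 q.2)) :
    ∃ c : E, ∀ x ∈ p ::ₘ q ::ₘ N, ∃ y ∈ (c, p.2 + q.2) ::ₘ N,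
      closedBall x.1 x.2 ⊆ closedBall y.1 y.2 := by
  obtain ⟨c, hpc, hqc⟩ := exists_closedBall_add_superset (hM p (by simp)) (hM q (by simp))
    (not_lt.1 (mt closedBall_disjoint_closedBall hpq))
  refine ⟨c, fun x hx => ?_⟩
  rcases Multiset.mem_cons.1 hx with rfl | hx
  · exact ⟨_, Multiset.mem_cons_self _ _, hpc⟩
  rcases Multiset.mem_cons.1 hx with rfl | hx
  · exact ⟨_, Multiset.mem_cons_self _ _, hqc⟩
  · exact ⟨x, Multiset.mem_cons_of_mem hx, subset_rfl⟩

theorem exists_pairwise_disjoint_closedBall_cover (M : Multiset (E × ℝ))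
    (hM : ∀ p ∈ M, 0 ≤ p.2) :
    ∃ B' : Finset (E × ℝ), (∀ q ∈ B', 0 ≤ q.2) ∧
      ((B' : Set (E × ℝ)).Pairwise fun p q =>
        Disjoint (closedBall p.1 p.2) (closedBall q.1 q.2)) ∧
      (∀ p ∈ M, ∃ q ∈ B', closedBall p.1 p.2 ⊆ closedBall q.1 q.2) ∧
      ∑ q ∈ B', q.2 = (M.map Prod.snd).sum := by
  induction hcard : M.card using Nat.strong_induction_on generalizing M with | _ n ih =>
  by_cases hmeet : ∃ p q N, M = p ::ₘ q ::ₘ N ∧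
      ¬Disjoint (closedBall p.1 p.2) (closedBall q.1 q.2)
  · obtain ⟨p, q, N, rfl, hpq⟩ := hmeet
    obtain ⟨c, hcover⟩ := exists_merge_of_not_disjoint_closedBall hM hpq
    have hM' : ∀ x ∈ (c, p.2 + q.2) ::ₘ N, 0 ≤ x.2 := by
      simp only [Multiset.mem_cons, forall_eq_or_imp] at hM ⊢
      exact ⟨add_nonneg hM.1 hM.2.1, hM.2.2⟩
    obtain ⟨B', hB'nonneg, hB'disj, hB'cover, hB'sum⟩ := ih _ (by simp [← hcard]) _ hM' rfl
    refine ⟨B', hB'nonneg, hB'disj, fun x hx => ?_, ?_⟩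
    · obtain ⟨y, hy, hxy⟩ := hcover x hx
      obtain ⟨z, hz, hyz⟩ := hB'cover y hy
      exact ⟨z, hz, hxy.trans hyz⟩
    · simp only [hB'sum, Multiset.map_cons, Multiset.sum_cons]
      ring
  · push Not at hmeet
    -- a ball of nonnegative radius is nonempty, so a repeated ball would meet itself
    have hnodup : M.Nodup := Multiset.nodup_iff_ne_cons_cons.2 fun p N hp =>
      Set.not_disjoint_iff.2 ⟨p.1, mem_closedBall_self (hM p (by simp [hp])),
        mem_closedBall_self (hM p (by simp [hp]))⟩ (hmeet p p N hp)
    refine ⟨⟨M, hnodup⟩, hM, fun p hp q hq hne => ?_, fun p hp => ⟨p, hp, subset_rfl⟩, rfl⟩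
    obtain ⟨N, rfl⟩ := Multiset.exists_cons_of_mem hp
    obtain ⟨N', rfl⟩ := Multiset.exists_cons_of_mem
      ((Multiset.mem_cons.1 (show q ∈ p ::ₘ N from hq)).resolve_left hne.symm)
    exact hmeet p q N' rfl

end

/-- Merging of balls: any finite collection of closed balls of `ℝ²` can
be covered by a finite collection of pairwise disjoint nonempty closed balls with the same
total sum of diameters. Balls are encoded by their centre and (nonnegative) radius. -/
theorem statement14 (B : Finset (R2 × ℝ)) (hB : ∀ p ∈ B, 0 ≤ p.2) :
    ∃ B' : Finset (R2 × ℝ), (∀ q ∈ B', 0 ≤ q.2) ∧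
      ((B' : Set (R2 × ℝ)).Pairwise fun p q =>
        Disjoint (Metric.closedBall p.1 p.2) (Metric.closedBall q.1 q.2)) ∧
      (∀ p ∈ B, ∃ q ∈ B', Metric.closedBall p.1 p.2 ⊆ Metric.closedBall q.1 q.2) ∧
      ∑ q ∈ B', 2 * q.2 = ∑ p ∈ B, 2 * p.2 := by
  obtain ⟨B', hnonneg, hdisj, hcover, hsum⟩ := exists_pairwise_disjoint_closedBall_cover B.val hB
  refine ⟨B', hnonneg, hdisj, hcover, ?_⟩
  rw [← Finset.mul_sum, ← Finset.mul_sum, hsum]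
  rfl
end
end

section
/- Let 𝓑₀ be a finite collection of closed balls in ℝ² with ⋃_{B∈𝓑₀} B ≠ ∅. Then for every t ∈ [0, ∞) there exists a finite collection 𝓑(t) of pairwise disjoint nonempty closed balls in ℝ² such that: (i) every ball of 𝓑₀ is contained in some ball of 𝓑(0); (ii) for every 0 ≤ t ≤ s, every ball of 𝓑(t) is contained in some ball of 𝓑(s); (iii) there exist ℓ ∈ ℕ* and disjoint intervals I₁, …, I_ℓ with [0,∞) = ⋃_{j=1}^ℓ I_j such that for each j and every t ∈ I_j, 𝓑(t) = {B̄_{ρ_j^i e^t}(a_j^i) : i = 1, …, k_j} for some centers a_j^i ∈ ℝ² and radii ρ_j^i ≥ 0; (iv) for every t ≥ 0, ∑_{B∈𝓑(t)} diam(B) = e^t ∑_{B∈𝓑₀} diam(B). -/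
open MeasureTheory Metric Set Filter Topology
open scoped ENNReal NNReal

noncomputable section

open Paper

/-!
Merging two intersecting balls `B̄_r(a)`, `B̄_s(b)` into one ball of radius `r + s` (centred on
the segment `[a, b]`) keeps the total radius and lowers the number of balls, so finitely many
merges turn `𝓑₀` into a collection of strictly separated balls. Now let every radius grow like
`e^t`. Finitely many balls touch for the first time at some time `T`; there we merge again and
restart the growth. Each restart lowers the number of balls, so after finitely many restarts the
balls grow forever without touching. Growth multiplies the total radius by `e^t` and merging
preserves it.
-/

section IntervalPartition

variable {α : Type*} [Preorder α]

def HasIntervalPartition (S : Set α) (P : Set α → Prop) : Prop :=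
  ∃ ℓ : ℕ, 0 < ℓ ∧ ∃ I : Fin ℓ → Set α,
    (Pairwise fun j j' => Disjoint (I j) (I j')) ∧ (⋃ j, I j) = S ∧
    (∀ j, (I j).OrdConnected) ∧ ∀ j, P (I j)

theorem hasIntervalPartition_of_ordConnected {S : Set α} {P : Set α → Prop}
    (hS : S.OrdConnected) (hP : P S) : HasIntervalPartition S P :=
  ⟨1, one_pos, fun _ => S, fun j j' h => (h (Subsingleton.elim j j')).elim, iUnion_const S,
    fun _ => hS, fun _ => hP⟩

theorem HasIntervalPartition.mono {S : Set α} {P Q : Set α → Prop}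
    (h : HasIntervalPartition S P) (hPQ : ∀ I ⊆ S, P I → Q I) : HasIntervalPartition S Q := by
  obtain ⟨ℓ, hℓ, I, hdisj, hunion, hconn, hP⟩ := h
  exact ⟨ℓ, hℓ, I, hdisj, hunion, hconn, fun j => hPQ _ (hunion ▸ subset_iUnion I j) (hP j)⟩

theorem HasIntervalPartition.union {A S : Set α} {P : Set α → Prop}
    (h : HasIntervalPartition S P) (hA : A.OrdConnected) (hPA : P A) (hAS : Disjoint A S) :
    HasIntervalPartition (A ∪ S) P := by
  obtain ⟨ℓ, -, I, hdisj, hunion, hconn, hP⟩ := h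
  have hIS : ∀ j, I j ⊆ S := fun j => hunion ▸ subset_iUnion I j
  refine ⟨ℓ + 1, ℓ.succ_pos, Fin.cons A I, ?_, by rw [iUnion_cons, hunion],
    Fin.forall_fin_succ.2 ⟨hA, hconn⟩, Fin.forall_fin_succ.2 ⟨hPA, hP⟩⟩
  refine pairwise_fin_succ_iff.2 ⟨fun j => ?_, fun j => ?_, fun j j' hjj' => hdisj hjj'⟩
  · exact (hAS.mono_right (hIS j)).symm
  · exact hAS.mono_right (hIS j)

end IntervalPartition

theorem Multiset.eq_cons_cons_erase_erase {α : Type*} [DecidableEq α] {s : Multiset α} {x y : α}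
    (hx : x ∈ s) (hy : y ∈ s) (hxy : x ≠ y) : s = x ::ₘ y ::ₘ (s.erase x).erase y := by
  rw [Multiset.cons_erase ((Multiset.mem_erase_of_ne hxy.symm).2 hy), Multiset.cons_erase hx]

namespace BallGrowth

section Dilate

variable {V : Type*}

theorem injective_mul_radius {c : ℝ} (hc : c ≠ 0) :
    Function.Injective fun p : V × ℝ => (p.1, p.2 * c) := by
  rintro ⟨a, r⟩ ⟨b, r'⟩ h
  simp only [Prod.mk.injEq] at h ⊢
  exact ⟨h.1, mul_right_cancel₀ hc h.2⟩

variable [DecidableEq (V × ℝ)]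

def dilate (c : ℝ) (s : Finset (V × ℝ)) : Finset (V × ℝ) :=
  s.image fun p => (p.1, p.2 * c)

theorem dilate_one (s : Finset (V × ℝ)) : dilate 1 s = s := by
  simp [dilate]

theorem radius_nonneg_of_mem_dilate {c : ℝ} {s : Finset (V × ℝ)} (hc : 0 ≤ c)
    (hs : ∀ p ∈ s, 0 ≤ p.2) : ∀ p ∈ dilate c s, 0 ≤ p.2 := by
  simp only [dilate, Finset.mem_image]
  rintro _ ⟨p, hp, rfl⟩
  exact mul_nonneg (hs p hp) hc

theorem sum_radius_dilate {c : ℝ} (hc : c ≠ 0) (s : Finset (V × ℝ)) :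
    ∑ p ∈ dilate c s, p.2 = c * ∑ p ∈ s, p.2 := by
  rw [dilate, Finset.sum_image (injective_mul_radius hc).injOn, Finset.mul_sum]
  simp only [mul_comm]

def IsExpGrowthOn (B : ℝ → Finset (V × ℝ)) (I : Set ℝ) : Prop :=
  ∃ (k : ℕ) (a : Fin k → V) (ρ : Fin k → ℝ), (∀ i, 0 ≤ ρ i) ∧
    ∀ t ∈ I, B t = Finset.image (fun i => (a i, ρ i * Real.exp t)) Finset.univ

theorem IsExpGrowthOn.congr {B B' : ℝ → Finset (V × ℝ)} {I : Set ℝ}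
    (h : IsExpGrowthOn B I) (hBB' : ∀ t ∈ I, B t = B' t) : IsExpGrowthOn B' I := by
  obtain ⟨k, a, ρ, hρ, hB⟩ := h
  exact ⟨k, a, ρ, hρ, fun t ht => (hBB' t ht).symm.trans (hB t ht)⟩

theorem isExpGrowthOn_of_eq_dilate {B : ℝ → Finset (V × ℝ)} {I : Set ℝ}
    {s : Finset (V × ℝ)} {t₀ : ℝ} (hs : ∀ p ∈ s, 0 ≤ p.2)
    (h : ∀ t ∈ I, B t = dilate (Real.exp (t - t₀)) s) : IsExpGrowthOn B I := by
  set e := s.equivFin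
  refine ⟨s.card, fun i => (e.symm i).1.1, fun i => (e.symm i).1.2 * Real.exp (-t₀),
    fun i => mul_nonneg (hs _ (e.symm i).2) (Real.exp_pos _).le, fun t ht => ?_⟩
  have hexp : Real.exp (-t₀) * Real.exp t = Real.exp (t - t₀) := by
    rw [← Real.exp_add, neg_add_eq_sub]
  rw [h t ht, dilate]
  ext q
  simp only [Finset.mem_image, Finset.mem_univ, true_and, mul_assoc, hexp]
  constructor
  · rintro ⟨p, hp, rfl⟩
    exact ⟨e ⟨p, hp⟩, by simp⟩
  · rintro ⟨i, rfl⟩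
    exact ⟨_, (e.symm i).2, rfl⟩

end Dilate

section Metric

variable {V : Type*} [PseudoMetricSpace V]

def Refines (S T : Set (V × ℝ)) : Prop :=
  ∀ p ∈ S, ∃ q ∈ T, closedBall p.1 p.2 ⊆ closedBall q.1 q.2

theorem Refines.refl (S : Set (V × ℝ)) : Refines S S :=
  fun p hp => ⟨p, hp, subset_rfl⟩

theorem Refines.trans {S T U : Set (V × ℝ)} (hST : Refines S T) (hTU : Refines T U) :
    Refines S U := by
  intro p hp
  obtain ⟨q, hq, hpq⟩ := hST p hp
  obtain ⟨r, hr, hqr⟩ := hTU q hq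
  exact ⟨r, hr, hpq.trans hqr⟩

theorem Refines.nonempty {S T : Set (V × ℝ)} (h : Refines S T) (hS : S.Nonempty) :
    T.Nonempty :=
  let ⟨_, hp⟩ := hS
  let ⟨q, hq, _⟩ := h _ hp
  ⟨q, hq⟩

def Separated (s : Finset (V × ℝ)) : Prop :=
  (s : Set (V × ℝ)).Pairwise fun p q => p.2 + q.2 < dist p.1 q.1

theorem Separated.pairwise_disjoint {s : Finset (V × ℝ)} (h : Separated s) :
    (s : Set (V × ℝ)).Pairwise fun p q => Disjoint (closedBall p.1 p.2) (closedBall q.1 q.2) :=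
  h.mono' fun _ _ => closedBall_disjoint_closedBall

/-- Merging is done in multisets: in a `Finset` the merged ball could coincide with a ball
already present, and its radius would drop out of the total. -/
def Overlapping (s : Multiset (V × ℝ)) : Prop :=
  ∃ x y r, s = x ::ₘ y ::ₘ r ∧ dist x.1 y.1 ≤ x.2 + y.2

theorem nodup_of_not_overlapping {s : Multiset (V × ℝ)} (hs : ∀ p ∈ s, 0 ≤ p.2)
    (h : ¬ Overlapping s) : s.Nodup := by
  refine Multiset.nodup_iff_ne_cons_cons.2 fun x r hsx => h ⟨x, x, r, hsx, ?_⟩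
  have := hs x (hsx ▸ Multiset.mem_cons_self x _)
  rw [dist_self]
  linarith

variable [DecidableEq (V × ℝ)]

theorem overlapping_val_of_not_separated {s : Finset (V × ℝ)} (h : ¬ Separated s) :
    Overlapping s.val := by
  simp only [Separated, Set.Pairwise, not_forall, not_lt] at h
  obtain ⟨x, hx, y, hy, hxy, hle⟩ := h
  exact ⟨x, y, _, Multiset.eq_cons_cons_erase_erase hx hy hxy, hle⟩

theorem separated_toFinset_of_not_overlapping {s : Multiset (V × ℝ)} (h : ¬ Overlapping s) :
    Separated s.toFinset := by
  intro x hx y hy hxy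
  by_contra hle
  exact h ⟨x, y, _, Multiset.eq_cons_cons_erase_erase (Multiset.mem_toFinset.1 hx)
    (Multiset.mem_toFinset.1 hy) hxy, not_lt.1 hle⟩

theorem refines_dilate {c c' : ℝ} {s : Finset (V × ℝ)} (hs : ∀ p ∈ s, 0 ≤ p.2) (hcc' : c ≤ c') :
    Refines (dilate c s : Set (V × ℝ)) (dilate c' s) := by
  simp only [Refines, dilate, Finset.coe_image, forall_mem_image, exists_mem_image]
  exact fun p hp => ⟨p, hp, closedBall_subset_closedBall
    (mul_le_mul_of_nonneg_left hcc' (hs p hp))⟩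

theorem separated_dilate_iff {c : ℝ} (hc : c ≠ 0) {s : Finset (V × ℝ)} :
    Separated (dilate c s) ↔ ∀ x ∈ s, ∀ y ∈ s, x ≠ y → c * (x.2 + y.2) < dist x.1 y.1 := by
  rw [Separated, dilate, Finset.coe_image, (injective_mul_radius hc).injOn.pairwise_image]
  simp only [Set.Pairwise, Finset.mem_coe, Function.onFun]
  refine forall₂_congr fun x _ => forall₂_congr fun y _ => imp_congr_right fun _ => ?_
  rw [mul_add, mul_comm c, mul_comm c]

theorem separated_dilate_or_exists_first_collision {s : Finset (V × ℝ)}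
    (hs : ∀ p ∈ s, 0 ≤ p.2) (hsep : Separated s) :
    (∀ c, 0 < c → Separated (dilate c s)) ∨
      ∃ c, 1 < c ∧ (∀ c', 0 < c' → c' < c → Separated (dilate c' s)) ∧
        ¬ Separated (dilate c s) := by
  -- the dilation factors at which two balls of positive total radius touch
  set F := ((s.offDiag).filter fun q => 0 < q.1.2 + q.2.2).image
    fun q => dist q.1.1 q.2.1 / (q.1.2 + q.2.2)
  have hsep' : ∀ x ∈ s, ∀ y ∈ s, x ≠ y → x.2 + y.2 < dist x.1 y.1 := fun x hx y hy =>
    hsep (Finset.mem_coe.2 hx) (Finset.mem_coe.2 hy)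
  have hbefore : ∀ c, 0 < c → (∀ f ∈ F, c < f) → Separated (dilate c s) := by
    intro c hc hF
    rw [separated_dilate_iff hc.ne']
    intro x hx y hy hxy
    rcases (add_nonneg (hs x hx) (hs y hy)).eq_or_lt with h0 | hpos
    · rw [← h0, mul_zero, h0]
      exact hsep' x hx y hy hxy
    · refine (lt_div_iff₀ hpos).1 (hF _ (Finset.mem_image.2 ⟨(x, y), ?_, rfl⟩))
      simpa using ⟨⟨hx, hy, hxy⟩, hpos⟩
  rcases F.eq_empty_or_nonempty with hF | hF
  · exact Or.inl fun c hc => hbefore c hc (by simp [hF])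
  obtain ⟨⟨x, y⟩, hxy, hmin⟩ := Finset.mem_image.1 (F.min'_mem hF)
  simp only [Finset.mem_filter, Finset.mem_offDiag] at hxy
  obtain ⟨⟨hx, hy, hne⟩, hpos⟩ := hxy
  have hmin1 : 1 < F.min' hF := hmin ▸ (one_lt_div hpos).2 (hsep' x hx y hy hne)
  refine Or.inr ⟨F.min' hF, hmin1,
    fun c hc hlt => hbefore c hc fun f hf => hlt.trans_le (F.min'_le f hf), ?_⟩
  rw [separated_dilate_iff (by linarith)]
  exact fun h => (h x hx y hy hne).ne (by rw [← hmin, div_mul_cancel₀ _ hpos.ne'])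

structure IsGrowth (s : Finset (V × ℝ)) (t₀ : ℝ) (B : ℝ → Finset (V × ℝ)) : Prop where
  radius_nonneg : ∀ t, t₀ ≤ t → ∀ p ∈ B t, 0 ≤ p.2
  separated : ∀ t, t₀ ≤ t → Separated (B t)
  sum_radius : ∀ t, t₀ ≤ t → ∑ p ∈ B t, p.2 = Real.exp (t - t₀) * ∑ p ∈ s, p.2
  refines_start : Refines (s : Set (V × ℝ)) (B t₀)
  refines_of_le : ∀ t t', t₀ ≤ t → t ≤ t' → Refines (B t : Set (V × ℝ)) (B t')
  piecewise : HasIntervalPartition (Ici t₀) (IsExpGrowthOn B)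

theorem isGrowth_dilate {s : Finset (V × ℝ)} {t₀ : ℝ} (hs : ∀ p ∈ s, 0 ≤ p.2)
    (hsep : ∀ t, t₀ ≤ t → Separated (dilate (Real.exp (t - t₀)) s)) :
    IsGrowth s t₀ fun t => dilate (Real.exp (t - t₀)) s where
  radius_nonneg _ _ := radius_nonneg_of_mem_dilate (Real.exp_pos _).le hs
  separated := hsep
  sum_radius _ _ := sum_radius_dilate (Real.exp_pos _).ne' s
  refines_start := by
    simpa only [sub_self, Real.exp_zero, dilate_one] using Refines.refl (s : Set (V × ℝ))
  refines_of_le _ _ _ htt' := refines_dilate hs (Real.exp_le_exp.2 (by linarith))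
  piecewise := hasIntervalPartition_of_ordConnected ordConnected_Ici
    (isExpGrowthOn_of_eq_dilate hs fun _ _ => rfl)

theorem IsGrowth.glue {s s' : Finset (V × ℝ)} {t₀ T : ℝ} {B' : ℝ → Finset (V × ℝ)}
    (hB' : IsGrowth s' T B') (hs : ∀ p ∈ s, 0 ≤ p.2) (hT : t₀ < T)
    (hsep : ∀ t ∈ Ico t₀ T, Separated (dilate (Real.exp (t - t₀)) s))
    (hrefines : Refines (dilate (Real.exp (T - t₀)) s : Set (V × ℝ)) s')
    (hsum : ∑ p ∈ s', p.2 = ∑ p ∈ dilate (Real.exp (T - t₀)) s, p.2) :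
    IsGrowth s t₀ fun t => if t < T then dilate (Real.exp (t - t₀)) s else B' t where
  radius_nonneg t _ := by
    split_ifs with h
    exacts [radius_nonneg_of_mem_dilate (Real.exp_pos _).le hs,
      hB'.radius_nonneg t (not_lt.1 h)]
  separated t ht := by
    split_ifs with h
    exacts [hsep t ⟨ht, h⟩, hB'.separated t (not_lt.1 h)]
  sum_radius t _ := by
    split_ifs with h
    · exact sum_radius_dilate (Real.exp_pos _).ne' s
    · rw [hB'.sum_radius t (not_lt.1 h), hsum, sum_radius_dilate (Real.exp_pos _).ne',
        ← mul_assoc, ← Real.exp_add, sub_add_sub_cancel]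
  refines_start := by
    simpa only [if_pos hT, sub_self, Real.exp_zero, dilate_one] using
      Refines.refl (s : Set (V × ℝ))
  refines_of_le t t' _ htt' := by
    split_ifs with h h'
    · exact refines_dilate hs (Real.exp_le_exp.2 (by linarith))
    · have hdilate := refines_dilate hs (Real.exp_le_exp.2 (by linarith : t - t₀ ≤ T - t₀))
      exact hdilate.trans (hrefines.trans (hB'.refines_start.trans
        (hB'.refines_of_le T t' le_rfl (not_lt.1 h'))))
    · exact absurd (htt'.trans_lt ‹t' < T›) h
    · exact hB'.refines_of_le t t' (not_lt.1 h) htt'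
  piecewise := by
    rw [← Ico_union_Ici_eq_Ici hT.le]
    refine (hB'.piecewise.mono fun I hI hgrowth => hgrowth.congr fun t ht => ?_).union
      ordConnected_Ico (isExpGrowthOn_of_eq_dilate hs fun t ht => if_pos ht.2)
      (disjoint_left.2 fun t ht ht' => not_le.2 ht.2 ht')
    exact (if_neg (not_lt.2 (hI ht))).symm

end Metric

section Normed

variable {V : Type*} [NormedAddCommGroup V] [NormedSpace ℝ V]

-- The centre divides `[x.1, y.1]` in the ratio `y.2 : x.2`, so it lies within `y.2` of `x.1`
-- and within `x.2` of `y.1`.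
def merge (x y : V × ℝ) : V × ℝ :=
  (AffineMap.lineMap x.1 y.1 (y.2 / (x.2 + y.2)), x.2 + y.2)

theorem closedBall_subset_merge {x y : V × ℝ} (hx : 0 ≤ x.2) (hy : 0 ≤ y.2)
    (hxy : dist x.1 y.1 ≤ x.2 + y.2) :
    closedBall x.1 x.2 ⊆ closedBall (merge x y).1 (merge x y).2 ∧
      closedBall y.1 y.2 ⊆ closedBall (merge x y).1 (merge x y).2 := by
  rcases (add_nonneg hx hy).eq_or_lt with h0 | hpos
  · have hx0 : x.2 = 0 := by linarith
    have hy0 : y.2 = 0 := by linarith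
    have hc : x.1 = y.1 := dist_le_zero.1 (h0 ▸ hxy)
    simp [merge, hx0, hy0, hc]
  have hcoef : 1 - y.2 / (x.2 + y.2) = x.2 / (x.2 + y.2) := by field_simp; ring
  refine ⟨closedBall_subset_closedBall' ?_, closedBall_subset_closedBall' ?_⟩
  · rw [merge, dist_comm, dist_lineMap_left, Real.norm_of_nonneg (by positivity)]
    have := mul_le_mul_of_nonneg_left hxy (div_nonneg hy hpos.le)
    rw [div_mul_cancel₀ _ hpos.ne'] at this
    linarith
  · rw [merge, dist_comm, dist_lineMap_right, hcoef, Real.norm_of_nonneg (by positivity)]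
    have := mul_le_mul_of_nonneg_left hxy (div_nonneg hx hpos.le)
    rw [div_mul_cancel₀ _ hpos.ne'] at this
    linarith

theorem exists_merge_of_overlapping {s : Multiset (V × ℝ)} (hs : ∀ p ∈ s, 0 ≤ p.2)
    (h : Overlapping s) :
    ∃ s₁ : Multiset (V × ℝ), Multiset.card s₁ < Multiset.card s ∧ (∀ p ∈ s₁, 0 ≤ p.2) ∧
      (s₁.map Prod.snd).sum = (s.map Prod.snd).sum ∧ Refines {p | p ∈ s} {p | p ∈ s₁} := by
  obtain ⟨x, y, r, rfl, hxy⟩ := h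
  simp only [Multiset.mem_cons, forall_eq_or_imp] at hs
  obtain ⟨hx, hy, hr⟩ := hs
  obtain ⟨hxm, hym⟩ := closedBall_subset_merge hx hy hxy
  refine ⟨merge x y ::ₘ r, by simp, ?_, by simp [merge, add_assoc], ?_⟩
  · intro p hp
    rcases Multiset.mem_cons.1 hp with rfl | hp
    exacts [add_nonneg hx hy, hr p hp]
  · intro p hp
    rcases Multiset.mem_cons.1 hp with rfl | hp
    · exact ⟨_, Multiset.mem_cons_self _ _, hxm⟩
    rcases Multiset.mem_cons.1 hp with rfl | hp
    exacts [⟨_, Multiset.mem_cons_self _ _, hym⟩, ⟨p, Multiset.mem_cons_of_mem hp, subset_rfl⟩]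

variable [DecidableEq (V × ℝ)]

theorem exists_separated_coarsening (s : Multiset (V × ℝ)) (hs : ∀ p ∈ s, 0 ≤ p.2) :
    ∃ s' : Finset (V × ℝ), (∀ p ∈ s', 0 ≤ p.2) ∧ Separated s' ∧
      ∑ p ∈ s', p.2 = (s.map Prod.snd).sum ∧ Refines {p | p ∈ s} s' ∧
      s'.card ≤ Multiset.card s ∧ (Overlapping s → s'.card < Multiset.card s) := by
  induction hn : Multiset.card s using Nat.strong_induction_on generalizing s with
  | _ n ih =>
  by_cases h : Overlapping s
  · obtain ⟨s₁, hcard, hs₁, hsum, hrefines⟩ := exists_merge_of_overlapping hs h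
    obtain ⟨s', hs', hsep', hsum', hrefines', hcard', -⟩ := ih _ (hn ▸ hcard) s₁ hs₁ rfl
    have hlt : s'.card < n := hn ▸ hcard'.trans_lt hcard
    exact ⟨s', hs', hsep', hsum'.trans hsum, hrefines.trans hrefines', hlt.le, fun _ => hlt⟩
  · subst hn
    have hnodup := nodup_of_not_overlapping hs h
    refine ⟨s.toFinset, by simpa using hs, separated_toFinset_of_not_overlapping h, ?_,
      fun p hp => ⟨p, Multiset.mem_toFinset.2 hp, subset_rfl⟩,
      (Multiset.toFinset_card_of_nodup hnodup).le, fun h' => (h h').elim⟩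
    rw [Finset.sum, Multiset.toFinset_val, Multiset.dedup_eq_self.2 hnodup]

theorem exists_isGrowth (s : Finset (V × ℝ)) (t₀ : ℝ) (hs : ∀ p ∈ s, 0 ≤ p.2)
    (hsep : Separated s) : ∃ B, IsGrowth s t₀ B := by
  induction hn : s.card using Nat.strong_induction_on generalizing s t₀ with
  | _ n ih =>
  rcases separated_dilate_or_exists_first_collision hs hsep with hnever | ⟨c, hc, hbefore, hcoll⟩
  · exact ⟨_, isGrowth_dilate hs fun t _ => hnever _ (Real.exp_pos _)⟩
  set T := t₀ + Real.log c
  have hcT : Real.exp (T - t₀) = c := by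
    rw [add_sub_cancel_left, Real.exp_log (by linarith)]
  obtain ⟨s', hs', hsep', hsum', hrefines', -, hcard'⟩ := exists_separated_coarsening
    (dilate c s).val (radius_nonneg_of_mem_dilate (by linarith) hs)
  have hlt : s'.card < n :=
    hn ▸ (hcard' (overlapping_val_of_not_separated hcoll)).trans_le Finset.card_image_le
  obtain ⟨B', hB'⟩ := ih _ hlt s' T hs' hsep' rfl
  refine ⟨_, hB'.glue hs (lt_add_of_pos_right _ (Real.log_pos hc))
    (fun t ht => hbefore _ (Real.exp_pos _) ?_) (by rwa [hcT]) (by rwa [hcT])⟩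
  calc Real.exp (t - t₀) < Real.exp (T - t₀) := Real.exp_lt_exp.2 (by linarith [ht.2])
    _ = c := hcT

end Normed

end BallGrowth

/-- The ball-growth construction: given a finite collection `B₀` of
closed balls with nonempty union, there is a family `B(t)`, `t ≥ 0`, of finite collections
of pairwise disjoint nonempty closed balls covering `B₀`, monotone in `t`, growing
exponentially on finitely many intervals, and whose total diameter is `e^t` times that of
`B₀`. Balls are encoded by their centre and (nonnegative) radius. -/
theorem statement15 [DecidableEq (R2 × ℝ)] (B₀ : Finset (R2 × ℝ)) (hB₀ : ∀ p ∈ B₀, 0 ≤ p.2) (hne : B₀.Nonempty) :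
    ∃ B : ℝ → Finset (R2 × ℝ),
      (∀ t : ℝ, 0 ≤ t → (∀ p ∈ B t, 0 ≤ p.2) ∧ (B t).Nonempty ∧
        ((B t : Set (R2 × ℝ)).Pairwise fun p q =>
          Disjoint (Metric.closedBall p.1 p.2) (Metric.closedBall q.1 q.2))) ∧
      -- (i) every ball of `B₀` is contained in a ball of `B 0`
      (∀ p ∈ B₀, ∃ q ∈ B 0, Metric.closedBall p.1 p.2 ⊆ Metric.closedBall q.1 q.2) ∧
      -- (ii) monotonicity
      (∀ t s : ℝ, 0 ≤ t → t ≤ s → ∀ p ∈ B t, ∃ q ∈ B s,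
        Metric.closedBall p.1 p.2 ⊆ Metric.closedBall q.1 q.2) ∧
      -- (iii) finitely many intervals of exponential growth
      (∃ ℓ : ℕ, 0 < ℓ ∧ ∃ I : Fin ℓ → Set ℝ,
        (Pairwise fun j j' => Disjoint (I j) (I j')) ∧ (⋃ j, I j) = Set.Ici (0:ℝ) ∧
        (∀ j, (I j).OrdConnected) ∧
        ∀ j, ∃ (kj : ℕ) (a : Fin kj → R2) (ρ : Fin kj → ℝ), (∀ i, 0 ≤ ρ i) ∧
          ∀ t ∈ I j, B t = Finset.image (fun i => (a i, ρ i * Real.exp t)) Finset.univ) ∧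
      -- (iv) exponential growth of the total diameter
      (∀ t : ℝ, 0 ≤ t → ∑ p ∈ B t, 2 * p.2 = Real.exp t * ∑ p ∈ B₀, 2 * p.2) := by
  obtain ⟨s₀, hs₀, hsep₀, hsum₀, hrefines₀, -, -⟩ :=
    BallGrowth.exists_separated_coarsening B₀.val hB₀
  obtain ⟨B, hB⟩ := BallGrowth.exists_isGrowth s₀ 0 hs₀ hsep₀
  have hcover : ∀ t, 0 ≤ t → BallGrowth.Refines (B₀ : Set (R2 × ℝ)) (B t) := fun t ht =>
    hrefines₀.trans (hB.refines_start.trans (hB.refines_of_le 0 t le_rfl ht))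
  refine ⟨B, fun t ht => ⟨hB.radius_nonneg t ht, ?_, (hB.separated t ht).pairwise_disjoint⟩,
    hcover 0 le_rfl, hB.refines_of_le, hB.piecewise, fun t ht => ?_⟩
  · exact Finset.coe_nonempty.1 ((hcover t ht).nonempty (Finset.coe_nonempty.2 hne))
  · rw [← Finset.mul_sum, ← Finset.mul_sum, hB.sum_radius t ht, hsum₀, sub_zero]
    exact mul_left_comm _ _ _
end
end
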